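/- arXiv:2105.01759 — 2 statements merged into one kernel-verified Lean document; each statement's English description precedes it below -/
import Mathlib

section
/- For n ≥ 1, m ≥ 1 and a ∈ (0,∞), there exists a constant B ∈ (0,∞) such that for all (x,z) ∈ ℝ^{n+m} with (x,z) ≠ (0,0), |ΔN| ≤ B |x|²/N³, where N = (|x|⁴ + a|z|²)^{1/4} and ΔN = Σ_{i=1}^n X_i² N is the sub-Laplacian applied to N. -/
open MeasureTheory Real Set

noncomputable section

abbrev Pt (n m : ℕ) : Type := (Fin n → ℝ) × (Fin m → ℝ)

/-- The step-two Carnot group vector field `X_i` at `p`, as a tangent vector. -/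
def Xvec {n m : ℕ} (Λ : Fin m → Matrix (Fin n) (Fin n) ℝ) (i : Fin n) (p : Pt n m) :
    Pt n m :=
  (fun j => if j = i then (1 : ℝ) else 0, fun k => (1 / 2) * ∑ l, Λ k i l * p.1 l)

/-- `X_i f`, the derivative of `f` along the vector field `X_i`. -/
def XD {n m : ℕ} (Λ : Fin m → Matrix (Fin n) (Fin n) ℝ)
    (f : Pt n m → ℝ) (i : Fin n) (p : Pt n m) : ℝ :=
  fderiv ℝ f p (Xvec Λ i p)

/-- Length of the sub-gradient, `|∇f| = (Σᵢ (Xᵢ f)²)^{1/2}`. -/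
def gradLen {n m : ℕ} (Λ : Fin m → Matrix (Fin n) (Fin n) ℝ)
    (f : Pt n m → ℝ) (p : Pt n m) : ℝ :=
  Real.sqrt (∑ i, (XD Λ f i p) ^ 2)

/-- Sub-Laplacian `Δf = Σᵢ Xᵢ² f`. -/
def subLap {n m : ℕ} (Λ : Fin m → Matrix (Fin n) (Fin n) ℝ)
    (f : Pt n m → ℝ) (p : Pt n m) : ℝ :=
  ∑ i, XD Λ (fun y => XD Λ f i y) i p

/-- Homogeneous norm `N(x,z) = (|x|⁴ + a|z|²)^{1/4}`. -/
def Nnorm {n m : ℕ} (a : ℝ) (p : Pt n m) : ℝ :=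
  ((∑ i, (p.1 i) ^ 2) ^ 2 + a * ∑ k, (p.2 k) ^ 2) ^ ((1 : ℝ) / 4)

/-!
With `u = N⁴ = |x|⁴ + a|z|²`, a polynomial, the chain rule applied twice to `N = u^{1/4}` gives
`X_i² N = ¼ u^{-3/4} X_i² u - 3/16 u^{-7/4} (X_i u)²`.
Skew-symmetry gives `Λ^{(k)}_{ii} = 0`, which removes the term `a Σ_k z_k Λ^{(k)}_{ii}` from
`X_i² u`, leaving `X_i² u = 8 x_i² + 4|x|² + (a/2) Σ_k ((Λ^{(k)} x)_i)²`.
By Cauchy–Schwarz, `Σ_i X_i² u ≲ |x|²` and `Σ_i (X_i u)² ≲ u |x|²`, so both terms of `ΔN` are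
`O(|x|² u^{-3/4}) = O(|x|² / N³)`.
-/

lemma Matrix.apply_self_eq_zero_of_transpose_eq_neg {ι G : Type*} [AddGroup G]
    [IsAddTorsionFree G] {A : Matrix ι ι G} (h : A.transpose = -A) (i : ι) : A i i = 0 :=
  self_eq_neg.1 (congr_fun₂ h i i)

namespace StepTwoCarnot

open Filter Topology

variable {n m : ℕ} (Λ : Fin m → Matrix (Fin n) (Fin n) ℝ)

section Calculus

variable {f g : Pt n m → ℝ} {p : Pt n m} {i : Fin n}

lemma XD_eq_of_hasFDerivAt {f' : Pt n m →L[ℝ] ℝ} (hf : HasFDerivAt f f' p) :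
    XD Λ f i p = f' (Xvec Λ i p) := by
  rw [XD, hf.fderiv]

lemma XD_congr (h : f =ᶠ[𝓝 p] g) : XD Λ f i p = XD Λ g i p := by
  rw [XD, XD, h.fderiv_eq]

lemma XD_mul (hf : DifferentiableAt ℝ f p) (hg : DifferentiableAt ℝ g p) :
    XD Λ (fun y => f y * g y) i p = f p * XD Λ g i p + g p * XD Λ f i p :=
  XD_eq_of_hasFDerivAt Λ (hf.hasFDerivAt.fun_mul hg.hasFDerivAt)

lemma XD_const_mul (hf : DifferentiableAt ℝ f p) (c : ℝ) :
    XD Λ (fun y => c * f y) i p = c * XD Λ f i p :=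
  XD_eq_of_hasFDerivAt Λ (hf.hasFDerivAt.const_mul c)

lemma XD_rpow_const (hf : DifferentiableAt ℝ f p) (hfp : f p ≠ 0) (r : ℝ) :
    XD Λ (fun y => f y ^ r) i p = r * f p ^ (r - 1) * XD Λ f i p :=
  XD_eq_of_hasFDerivAt Λ (hf.hasFDerivAt.rpow_const (Or.inl hfp))

end Calculus

def xCoord (i : Fin n) : Pt n m →L[ℝ] ℝ :=
  (ContinuousLinearMap.proj i).comp (ContinuousLinearMap.fst ℝ _ _)

def zCoord (k : Fin m) : Pt n m →L[ℝ] ℝ :=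
  (ContinuousLinearMap.proj k).comp (ContinuousLinearMap.snd ℝ _ _)

@[simp] lemma xCoord_apply (i : Fin n) (w : Pt n m) : xCoord i w = w.1 i := rfl

@[simp] lemma zCoord_apply (k : Fin m) (w : Pt n m) : zCoord k w = w.2 k := rfl

def xSq (p : Pt n m) : ℝ := ∑ i, p.1 i ^ 2

def zSq (p : Pt n m) : ℝ := ∑ k, p.2 k ^ 2

def Nnorm4 (a : ℝ) (p : Pt n m) : ℝ := xSq p ^ 2 + a * zSq p

/-- `(Λ^{(k)} x)_i`. -/
def lamX (k : Fin m) (i : Fin n) (p : Pt n m) : ℝ := ∑ l, Λ k i l * p.1 l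

def XNnorm4 (a : ℝ) (i : Fin n) (p : Pt n m) : ℝ :=
  4 * xSq p * p.1 i + a * ∑ k, p.2 k * lamX Λ k i p

def XXNnorm4 (a : ℝ) (i : Fin n) (p : Pt n m) : ℝ :=
  8 * p.1 i ^ 2 + 4 * xSq p + a / 2 * ∑ k, lamX Λ k i p ^ 2

def lamFrobSq : ℝ := ∑ k, ∑ i, ∑ l, Λ k i l ^ 2

@[simp] lemma Xvec_fst (i j : Fin n) (p : Pt n m) :
    (Xvec Λ i p).1 j = if j = i then 1 else 0 := rfl

@[simp] lemma Xvec_snd (i : Fin n) (p : Pt n m) (k : Fin m) :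
    (Xvec Λ i p).2 k = lamX Λ k i p / 2 := by
  rw [Xvec, lamX]
  ring

lemma hasFDerivAt_xSq (p : Pt n m) : HasFDerivAt xSq (∑ j, (2 * p.1 j) • xCoord j) p :=
  HasFDerivAt.fun_sum fun j _ => by simpa using (xCoord j).hasFDerivAt.pow 2

lemma hasFDerivAt_zSq (p : Pt n m) : HasFDerivAt zSq (∑ k, (2 * p.2 k) • zCoord k) p :=
  HasFDerivAt.fun_sum fun k _ => by simpa using (zCoord k).hasFDerivAt.pow 2

lemma hasFDerivAt_lamX (k : Fin m) (i : Fin n) (p : Pt n m) :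
    HasFDerivAt (lamX Λ k i) (∑ l, Λ k i l • xCoord l) p :=
  HasFDerivAt.fun_sum fun l _ => (xCoord l).hasFDerivAt.const_mul _

lemma differentiable_Nnorm4 (a : ℝ) : Differentiable ℝ (Nnorm4 (n := n) (m := m) a) := by
  unfold Nnorm4 xSq zSq
  fun_prop

lemma differentiable_XNnorm4 (a : ℝ) (i : Fin n) : Differentiable ℝ (XNnorm4 Λ a i) := by
  unfold XNnorm4 xSq lamX
  fun_prop

lemma XD_Nnorm4 (a : ℝ) (i : Fin n) (p : Pt n m) : XD Λ (Nnorm4 a) i p = XNnorm4 Λ a i p := by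
  have hu : HasFDerivAt (Nnorm4 a) _ p :=
    ((hasFDerivAt_xSq p).pow 2).add ((hasFDerivAt_zSq p).const_mul a)
  rw [XD_eq_of_hasFDerivAt Λ hu]
  have hz : ∑ k, 2 * p.2 k * (lamX Λ k i p / 2) = ∑ k, p.2 k * lamX Λ k i p :=
    Finset.sum_congr rfl fun k _ => by ring
  simp only [Nat.add_one_sub_one, pow_one, nsmul_eq_mul, Nat.cast_ofNat,
    add_apply, smul_apply, sum_apply,
    xCoord_apply, zCoord_apply, Xvec_fst, Xvec_snd, smul_eq_mul, mul_ite, mul_one, mul_zero,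
    Finset.sum_ite_eq', Finset.mem_univ, if_true, XNnorm4, hz]
  ring

lemma XD_XNnorm4 (a : ℝ) {i : Fin n} (hdiag : ∀ k, Λ k i i = 0) (p : Pt n m) :
    XD Λ (XNnorm4 Λ a i) i p = XXNnorm4 Λ a i p := by
  have hV : HasFDerivAt (XNnorm4 Λ a i) _ p :=
    (((hasFDerivAt_xSq p).const_mul 4).fun_mul (xCoord i).hasFDerivAt).fun_add
      ((HasFDerivAt.fun_sum (u := Finset.univ) fun k _ =>
        (zCoord k).hasFDerivAt.fun_mul (hasFDerivAt_lamX Λ k i p)).const_mul a)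
  rw [XD_eq_of_hasFDerivAt Λ hV]
  have hsum : ∑ k, lamX Λ k i p * (lamX Λ k i p / 2) = (∑ k, lamX Λ k i p ^ 2) / 2 := by
    rw [Finset.sum_div]
    exact Finset.sum_congr rfl fun k _ => by ring
  simp only [add_apply, smul_apply,
    sum_apply, xCoord_apply, zCoord_apply, Xvec_fst, Xvec_snd, if_true,
    smul_eq_mul, mul_one, mul_ite, mul_zero, Finset.sum_ite_eq', Finset.mem_univ, hdiag, zero_add,
    XXNnorm4, hsum]
  ring

lemma XD_Nnorm {a : ℝ} {p : Pt n m} (hu : 0 < Nnorm4 a p) (i : Fin n) :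
    XD Λ (Nnorm a) i p = 1 / 4 * Nnorm4 a p ^ (-3 / 4 : ℝ) * XNnorm4 Λ a i p := by
  change XD Λ (fun y => Nnorm4 a y ^ (1 / 4 : ℝ)) i p = _
  rw [XD_rpow_const Λ (differentiable_Nnorm4 a p) hu.ne', XD_Nnorm4]
  norm_num

lemma XD_XD_Nnorm {a : ℝ} {p : Pt n m} (hu : 0 < Nnorm4 a p) {i : Fin n}
    (hdiag : ∀ k, Λ k i i = 0) :
    XD Λ (XD Λ (Nnorm a) i) i p
      = 1 / 4 * Nnorm4 a p ^ (-3 / 4 : ℝ) * XXNnorm4 Λ a i p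
        - 3 / 16 * Nnorm4 a p ^ (-7 / 4 : ℝ) * XNnorm4 Λ a i p ^ 2 := by
  have hev : XD Λ (Nnorm a) i =ᶠ[𝓝 p]
      fun y => 1 / 4 * Nnorm4 a y ^ (-3 / 4 : ℝ) * XNnorm4 Λ a i y :=
    ((differentiable_Nnorm4 a).continuous.continuousAt.eventually (lt_mem_nhds hu)).mono
      fun y hy => XD_Nnorm Λ hy i
  have hd : DifferentiableAt ℝ (Nnorm4 a) p := differentiable_Nnorm4 a p
  have hr : DifferentiableAt ℝ (fun y => Nnorm4 a y ^ (-3 / 4 : ℝ)) p :=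
    hd.rpow_const (Or.inl hu.ne')
  rw [XD_congr Λ hev, XD_mul Λ (hr.const_mul _) (differentiable_XNnorm4 Λ a i p),
    XD_const_mul Λ hr, XD_rpow_const Λ hd hu.ne', XD_Nnorm4, XD_XNnorm4 Λ a hdiag,
    show (-3 / 4 : ℝ) - 1 = -7 / 4 by norm_num]
  ring

lemma subLap_Nnorm (hskew : ∀ k, (Λ k).transpose = -(Λ k)) {a : ℝ} {p : Pt n m}
    (hu : 0 < Nnorm4 a p) :
    subLap Λ (Nnorm a) p
      = 1 / 4 * Nnorm4 a p ^ (-3 / 4 : ℝ) * ∑ i, XXNnorm4 Λ a i p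
        - 3 / 16 * Nnorm4 a p ^ (-7 / 4 : ℝ) * ∑ i, XNnorm4 Λ a i p ^ 2 := by
  simp only [subLap, XD_XD_Nnorm Λ hu fun k =>
    Matrix.apply_self_eq_zero_of_transpose_eq_neg (hskew k) _, Finset.sum_sub_distrib,
    Finset.mul_sum]

lemma Nnorm_pow_three {a : ℝ} {p : Pt n m} (hu : 0 ≤ Nnorm4 a p) :
    Nnorm a p ^ 3 = Nnorm4 a p ^ (3 / 4 : ℝ) := by
  change (Nnorm4 a p ^ (1 / 4 : ℝ)) ^ 3 = _
  rw [← Real.rpow_natCast, ← Real.rpow_mul hu]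
  norm_num

lemma xSq_nonneg (p : Pt n m) : 0 ≤ xSq p := by
  unfold xSq
  positivity

lemma zSq_nonneg (p : Pt n m) : 0 ≤ zSq p := by
  unfold zSq
  positivity

lemma xSq_eq_zero_iff {p : Pt n m} : xSq p = 0 ↔ p.1 = 0 := by
  simp [xSq, Finset.sum_eq_zero_iff_of_nonneg fun _ _ => sq_nonneg _, funext_iff]

lemma zSq_eq_zero_iff {p : Pt n m} : zSq p = 0 ↔ p.2 = 0 := by
  simp [zSq, Finset.sum_eq_zero_iff_of_nonneg fun _ _ => sq_nonneg _, funext_iff]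

lemma Nnorm4_pos {a : ℝ} (ha : 0 < a) {p : Pt n m} (hp : p ≠ 0) : 0 < Nnorm4 a p := by
  have hx := xSq_nonneg p
  have hz := zSq_nonneg p
  refine lt_of_le_of_ne (by unfold Nnorm4; positivity) fun h => hp ?_
  obtain ⟨hx0, hz0⟩ := (add_eq_zero_iff_of_nonneg (by positivity) (by positivity)).1 h.symm
  exact Prod.ext (xSq_eq_zero_iff.1 (pow_eq_zero_iff two_ne_zero |>.1 hx0))
    (zSq_eq_zero_iff.1 ((mul_eq_zero.1 hz0).resolve_left ha.ne'))

lemma sum_sum_sq_lamX_le (p : Pt n m) : ∑ i, ∑ k, lamX Λ k i p ^ 2 ≤ lamFrobSq Λ * xSq p :=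
  calc ∑ i, ∑ k, lamX Λ k i p ^ 2 ≤ ∑ i, ∑ k, (∑ l, Λ k i l ^ 2) * xSq p :=
        Finset.sum_le_sum fun i _ => Finset.sum_le_sum fun k _ =>
          Finset.sum_mul_sq_le_sq_mul_sq _ _ _
    _ = lamFrobSq Λ * xSq p := by
        rw [lamFrobSq, Finset.sum_comm]
        simp only [Finset.sum_mul]

lemma XXNnorm4_nonneg {a : ℝ} (ha : 0 ≤ a) (i : Fin n) (p : Pt n m) :
    0 ≤ XXNnorm4 Λ a i p := by
  unfold XXNnorm4 xSq
  positivity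

lemma sum_XXNnorm4_le {a : ℝ} (ha : 0 ≤ a) (p : Pt n m) :
    ∑ i, XXNnorm4 Λ a i p ≤ (8 + 4 * n + a / 2 * lamFrobSq Λ) * xSq p := by
  have h : ∑ i, XXNnorm4 Λ a i p
      = 8 * xSq p + 4 * n * xSq p + a / 2 * ∑ i, ∑ k, lamX Λ k i p ^ 2 := by
    simp only [XXNnorm4, xSq, Finset.sum_add_distrib, ← Finset.mul_sum, Finset.sum_const,
      Finset.card_univ, Fintype.card_fin, nsmul_eq_mul]
    ring
  rw [h]
  nlinarith [mul_le_mul_of_nonneg_left (sum_sum_sq_lamX_le Λ p) (by positivity : 0 ≤ a / 2)]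

lemma sq_XNnorm4_le (a : ℝ) (i : Fin n) (p : Pt n m) :
    XNnorm4 Λ a i p ^ 2
      ≤ 32 * xSq p ^ 2 * p.1 i ^ 2 + 2 * a ^ 2 * zSq p * ∑ k, lamX Λ k i p ^ 2 := by
  have hcs : (∑ k, p.2 k * lamX Λ k i p) ^ 2 ≤ zSq p * ∑ k, lamX Λ k i p ^ 2 :=
    Finset.sum_mul_sq_le_sq_mul_sq _ _ _
  unfold XNnorm4
  nlinarith [sq_nonneg (4 * xSq p * p.1 i - a * ∑ k, p.2 k * lamX Λ k i p)]

lemma sum_sq_XNnorm4_le {a : ℝ} (ha : 0 ≤ a) (p : Pt n m) :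
    ∑ i, XNnorm4 Λ a i p ^ 2 ≤ (32 + 2 * a * lamFrobSq Λ) * Nnorm4 a p * xSq p :=
  calc ∑ i, XNnorm4 Λ a i p ^ 2
      ≤ ∑ i, (32 * xSq p ^ 2 * p.1 i ^ 2 + 2 * a ^ 2 * zSq p * ∑ k, lamX Λ k i p ^ 2) :=
        Finset.sum_le_sum fun i _ => sq_XNnorm4_le Λ a i p
    _ = 32 * xSq p ^ 3 + 2 * a ^ 2 * zSq p * ∑ i, ∑ k, lamX Λ k i p ^ 2 := by
        simp only [xSq, Finset.sum_add_distrib, ← Finset.mul_sum]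
        ring
    _ ≤ 32 * xSq p ^ 3 + 2 * a ^ 2 * zSq p * (lamFrobSq Λ * xSq p) := by
        gcongr
        · exact mul_nonneg (by positivity) (zSq_nonneg p)
        · exact sum_sum_sq_lamX_le Λ p
    _ ≤ (32 + 2 * a * lamFrobSq Λ) * Nnorm4 a p * xSq p := by
        rw [← sub_nonneg]
        have e : (32 + 2 * a * lamFrobSq Λ) * Nnorm4 a p * xSq p
            - (32 * xSq p ^ 3 + 2 * a ^ 2 * zSq p * (lamFrobSq Λ * xSq p))
            = 32 * a * zSq p * xSq p + 2 * a * lamFrobSq Λ * xSq p ^ 3 := by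
          unfold Nnorm4
          ring
        rw [e]
        unfold lamFrobSq xSq zSq
        positivity

lemma abs_subLap_Nnorm_le (hskew : ∀ k, (Λ k).transpose = -(Λ k)) {a : ℝ} (ha : 0 < a)
    {p : Pt n m} (hp : p ≠ 0) :
    |subLap Λ (Nnorm a) p| ≤ (n + 8 + a / 2 * lamFrobSq Λ) * xSq p / Nnorm a p ^ 3 := by
  have hu := Nnorm4_pos ha hp
  have hXX := sum_XXNnorm4_le Λ ha.le p
  have hX := sum_sq_XNnorm4_le Λ ha.le p
  have hXX0 : 0 ≤ ∑ i, XXNnorm4 Λ a i p :=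
    Finset.sum_nonneg fun i _ => XXNnorm4_nonneg Λ ha.le i p
  have hX0 : 0 ≤ ∑ i, XNnorm4 Λ a i p ^ 2 := by positivity
  rw [subLap_Nnorm Λ hskew hu, Nnorm_pow_three hu.le]
  set u := Nnorm4 a p
  have h7 : u ^ (-7 / 4 : ℝ) = u ^ (-3 / 4 : ℝ) / u := by
    rw [show (-7 / 4 : ℝ) = -3 / 4 - 1 by norm_num, Real.rpow_sub_one hu.ne']
  have h3 : u ^ (3 / 4 : ℝ) = (u ^ (-3 / 4 : ℝ))⁻¹ := by
    rw [show (-3 / 4 : ℝ) = -(3 / 4) by norm_num, Real.rpow_neg hu.le, inv_inv]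
  rw [h7, h3, div_inv_eq_mul]
  set w := u ^ (-3 / 4 : ℝ)
  have hw : 0 < w := Real.rpow_pos_of_pos hu _
  calc _ ≤ 1 / 4 * w * ∑ i, XXNnorm4 Λ a i p + 3 / 16 * (w / u) * ∑ i, XNnorm4 Λ a i p ^ 2 := by
        refine abs_sub_le_iff.2 ⟨?_, ?_⟩ <;> nlinarith [div_pos hw hu]
    _ ≤ 1 / 4 * w * ((8 + 4 * n + a / 2 * lamFrobSq Λ) * xSq p)
          + 3 / 16 * (w / u) * ((32 + 2 * a * lamFrobSq Λ) * u * xSq p) := by gcongr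
    _ = (n + 8 + a / 2 * lamFrobSq Λ) * xSq p * w := by
        field_simp
        ring

end StepTwoCarnot

theorem statement_11_general (n m : ℕ)
    (Λ : Fin m → Matrix (Fin n) (Fin n) ℝ)
    (hskew : ∀ k, (Λ k).transpose = -(Λ k))
    (a : ℝ) (ha : 0 < a) :
    ∃ B : ℝ, 0 < B ∧ ∀ p : Pt n m, p ≠ 0 →
      |subLap Λ (Nnorm a) p| ≤ B * (∑ i, (p.1 i) ^ 2) / (Nnorm a p) ^ 3 :=
  ⟨n + 8 + a / 2 * StepTwoCarnot.lamFrobSq Λ, by unfold StepTwoCarnot.lamFrobSq; positivity,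
    fun _ hp => StepTwoCarnot.abs_subLap_Nnorm_le Λ hskew ha hp⟩

theorem statement_11 (n m : ℕ) (hn : 1 ≤ n) (hm : 1 ≤ m)
    (Λ : Fin m → Matrix (Fin n) (Fin n) ℝ)
    (hskew : ∀ k, (Λ k).transpose = -(Λ k))
    (hli : LinearIndependent ℝ Λ)
    (a : ℝ) (ha : 0 < a) :
    ∃ B : ℝ, 0 < B ∧ ∀ p : Pt n m, p ≠ 0 →
      |subLap Λ (Nnorm a) p| ≤ B * (∑ i, (p.1 i) ^ 2) / (Nnorm a p) ^ 3 :=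
  statement_11_general n m Λ hskew a ha
end
end

section
/- For n ≥ 1, m ≥ 1 and a ∈ (0,∞), for all (x,z) ∈ ℝ^{n+m} with (x,z) ≠ (0,0), the sub-Laplacian of N satisfies the exact identity ΔN = (n−1)|x|²/N³ + (|x|²/N³)[ −3 N^{-4}( −a|z|² + (a²/16) Σ_{k,k'=1}^m Σ_{l,l'=1}^n Σ_{i=1}^n Λ^{(k)}_{il} Λ^{(k')}_{il'} (x_l/|x|)(x_{l'}/|x|) z_k z_{k'} ) + (a/8) Σ_{k=1}^m Σ_{l,l'=1}^n Σ_{i=1}^n Λ^{(k)}_{il} Λ^{(k)}_{il'} (x_l/|x|)(x_{l'}/|x|) ] for x ≠ 0, where N = (|x|⁴ + a|z|²)^{1/4} and ΔN = Σ_{i=1}^n X_i² N. -/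
open MeasureTheory Real Set

noncomputable section

/-! Write `N⁴ = |x|⁴ + a|z|²`, a polynomial. The chain rule gives `Xᵢ N = Xᵢ(N⁴) / (4N³)` and
`Xᵢ² N = Xᵢ²(N⁴) / (4N³) - 3 (Xᵢ(N⁴))² / (16N⁷)`, with `Xᵢ(N⁴) = 4|x|²xᵢ + a Σₖ zₖ (Λ⁽ᵏ⁾x)ᵢ`.
Skew-symmetry removes the diagonal entries `Λ⁽ᵏ⁾ᵢᵢ` from `Xᵢ²(N⁴)` and the cross term
`Σᵢ xᵢ (Λ⁽ᵏ⁾x)ᵢ = ⟨x, Λ⁽ᵏ⁾x⟩ = 0` from `Σᵢ (Xᵢ(N⁴))²`; after summing over `i`, the identity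
`N⁴ = |x|⁴ + a|z|²` turns `2|x|²/N³ - 3|x|⁶/N⁷` into `-|x|²/N³ + 3a|x|²|z|²/N⁷`, which is the
stated form. -/

open scoped Matrix

section XDCalculus

variable {n m : ℕ} (Λ : Fin m → Matrix (Fin n) (Fin n) ℝ) (i : Fin n) {p : Pt n m}
  {f g : Pt n m → ℝ}

theorem XD_congr (h : f =ᶠ[nhds p] g) : XD Λ f i p = XD Λ g i p := by
  rw [XD, XD, h.fderiv_eq]

theorem XD_add (hf : DifferentiableAt ℝ f p) (hg : DifferentiableAt ℝ g p) :
    XD Λ (fun q => f q + g q) i p = XD Λ f i p + XD Λ g i p := by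
  simp only [XD, fderiv_fun_add hf hg, add_apply]

theorem XD_mul (hf : DifferentiableAt ℝ f p) (hg : DifferentiableAt ℝ g p) :
    XD Λ (fun q => f q * g q) i p = XD Λ f i p * g p + f p * XD Λ g i p := by
  simp only [XD, fderiv_fun_mul hf hg, add_apply, smul_apply, smul_eq_mul]
  ring

theorem XD_const_mul (c : ℝ) (hf : DifferentiableAt ℝ f p) :
    XD Λ (fun q => c * f q) i p = c * XD Λ f i p := by
  simp only [XD, fderiv_const_mul hf, smul_apply, smul_eq_mul]

theorem XD_sum {ι : Type*} (s : Finset ι) {F : ι → Pt n m → ℝ}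
    (hF : ∀ j ∈ s, DifferentiableAt ℝ (F j) p) :
    XD Λ (fun q => ∑ j ∈ s, F j q) i p = ∑ j ∈ s, XD Λ (F j) i p := by
  simp only [XD, fderiv_fun_sum hF, sum_apply]

theorem XD_pow (k : ℕ) (hf : DifferentiableAt ℝ f p) :
    XD Λ (fun q => f q ^ k) i p = k * f p ^ (k - 1) * XD Λ f i p := by
  simp only [XD, fderiv_fun_pow k hf, smul_apply, nsmul_eq_mul, smul_eq_mul, mul_assoc]

theorem XD_rpow_const (r : ℝ) (hf : DifferentiableAt ℝ f p) (h : f p ≠ 0) :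
    XD Λ (fun q => f q ^ r) i p = r * f p ^ (r - 1) * XD Λ f i p := by
  simp only [XD, (hf.hasFDerivAt.rpow_const (Or.inl h)).fderiv, smul_apply, smul_eq_mul]

theorem XD_fst (j : Fin n) : XD Λ (fun q => q.1 j) i p = if j = i then 1 else 0 :=
  congrArg (fun ℓ => ℓ (Xvec Λ i p))
    ((ContinuousLinearMap.proj j).comp (ContinuousLinearMap.fst ℝ _ _)).fderiv

theorem XD_snd (k : Fin m) : XD Λ (fun q => q.2 k) i p = 1 / 2 * (Λ k *ᵥ p.1) i :=
  congrArg (fun ℓ => ℓ (Xvec Λ i p))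
    ((ContinuousLinearMap.proj k).comp (ContinuousLinearMap.snd ℝ _ _)).fderiv

end XDCalculus

section SkewSymmetric

variable {R ι : Type*} [CommRing R] [NoZeroDivisors R] [CharZero R] {M : Matrix ι ι R}

theorem Matrix.diag_eq_zero_of_transpose_eq_neg (hM : Mᵀ = -M) (i : ι) : M i i = 0 :=
  self_eq_neg.mp (by simpa using congrFun (congrFun hM i) i)

theorem Matrix.dotProduct_mulVec_self_eq_zero_of_transpose_eq_neg [Fintype ι] (hM : Mᵀ = -M)
    (v : ι → R) : v ⬝ᵥ (M *ᵥ v) = 0 := by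
  refine self_eq_neg.mp ?_
  calc v ⬝ᵥ (M *ᵥ v) = (Mᵀ *ᵥ v) ⬝ᵥ v := by
        rw [Matrix.dotProduct_mulVec, Matrix.mulVec_transpose]
    _ = -(v ⬝ᵥ (M *ᵥ v)) := by
        rw [hM, Matrix.neg_mulVec, neg_dotProduct, dotProduct_comm]

end SkewSymmetric

section SumReshaping

variable {R ι κ μ : Type*} [CommSemiring R] [Fintype ι] [Fintype κ] [Fintype μ]

theorem Matrix.mulVec_dotProduct_mulVec (M N : Matrix κ ι R) (u v : ι → R) :
    (M *ᵥ u) ⬝ᵥ (N *ᵥ v) = ∑ l, ∑ l', ∑ i, M i l * N i l' * u l * v l' := by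
  simp only [dotProduct, Matrix.mulVec, Finset.sum_mul_sum]
  conv_rhs => rw [Finset.sum_comm_cycle]
  exact Finset.sum_congr rfl fun i _ => Finset.sum_congr rfl fun l _ =>
    Finset.sum_congr rfl fun l' _ => by ring

theorem Matrix.sum_sum_mulVec_sq (M : μ → Matrix κ ι R) (u : ι → R) :
    ∑ i, ∑ k, (M k *ᵥ u) i ^ 2 = ∑ k, ∑ l, ∑ l', ∑ i, M k i l * M k i l' * u l * u l' := by
  simp only [Finset.sum_comm (s := (Finset.univ : Finset κ)), ← Matrix.mulVec_dotProduct_mulVec,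
    dotProduct, sq]

theorem Matrix.sum_sq_sum_mul_mulVec (M : μ → Matrix κ ι R) (u : ι → R) (z : μ → R) :
    ∑ i, (∑ k, z k * (M k *ᵥ u) i) ^ 2 =
      ∑ k, ∑ k', ∑ l, ∑ l', ∑ i, M k i l * M k' i l' * u l * u l' * z k * z k' := by
  calc ∑ i, (∑ k, z k * (M k *ᵥ u) i) ^ 2
      = ∑ k, ∑ k', (M k *ᵥ u) ⬝ᵥ (M k' *ᵥ u) * z k * z k' := by
        simp only [sq, Finset.sum_mul_sum]
        simp only [dotProduct, Finset.sum_mul]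
        conv_rhs => rw [Finset.sum_comm_cycle]
        exact Finset.sum_congr rfl fun i _ => Finset.sum_congr rfl fun k _ =>
          Finset.sum_congr rfl fun k' _ => by ring
    _ = _ := by simp only [Matrix.mulVec_dotProduct_mulVec, Finset.sum_mul]

end SumReshaping

theorem Matrix.mulVec_div_const {R ι κ : Type*} [DivisionSemiring R] [Fintype ι] (M : Matrix κ ι R)
    (u : ι → R) (c : R) : (M *ᵥ fun l => u l / c) = fun i => (M *ᵥ u) i / c := by
  ext i
  simp only [Matrix.mulVec, dotProduct, Finset.sum_div, mul_div_assoc]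

theorem sum_sq_pos_of_ne_zero {ι : Type*} [Fintype ι] {x : ι → ℝ} (hx : x ≠ 0) :
    0 < ∑ j, x j ^ 2 := by
  obtain ⟨j, hj⟩ := Function.ne_iff.mp hx
  exact Finset.sum_pos' (fun j _ => sq_nonneg _) ⟨j, Finset.mem_univ j, pow_two_pos_of_ne_zero hj⟩

section HomogeneousNorm

variable {n m : ℕ} (Λ : Fin m → Matrix (Fin n) (Fin n) ℝ) (a : ℝ) (i : Fin n) {p : Pt n m}

def Nnorm4 (a : ℝ) (p : Pt n m) : ℝ := (∑ j, p.1 j ^ 2) ^ 2 + a * ∑ k, p.2 k ^ 2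

def Nnorm4Deriv (p : Pt n m) : ℝ :=
  4 * (∑ j, p.1 j ^ 2) * p.1 i + a * ∑ k, p.2 k * (Λ k *ᵥ p.1) i

theorem differentiable_Nnorm4 : Differentiable ℝ (Nnorm4 (n := n) (m := m) a) := by
  unfold Nnorm4; fun_prop

theorem differentiable_Nnorm4Deriv : Differentiable ℝ (Nnorm4Deriv Λ a i) := by
  unfold Nnorm4Deriv
  simp only [Matrix.mulVec, dotProduct]
  fun_prop

theorem Nnorm4_pos {a : ℝ} (ha : 0 ≤ a) (hx : p.1 ≠ 0) : 0 < Nnorm4 a p := by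
  have := sum_sq_pos_of_ne_zero hx
  unfold Nnorm4
  positivity

theorem Nnorm_eq_Nnorm4_rpow : Nnorm a p = Nnorm4 a p ^ ((1 : ℝ) / 4) := rfl

theorem Nnorm4_rpow_neg_div_four {a : ℝ} (h : 0 ≤ Nnorm4 a p) (k : ℕ) :
    Nnorm4 a p ^ (-(k : ℝ) / 4) = (Nnorm a p ^ k)⁻¹ := by
  rw [neg_div, Real.rpow_neg h, div_eq_mul_one_div, mul_comm, Real.rpow_mul h,
    Real.rpow_natCast, ← Nnorm_eq_Nnorm4_rpow]

theorem Nnorm_pow_four {a : ℝ} (h : 0 ≤ Nnorm4 a p) : Nnorm a p ^ 4 = Nnorm4 a p := by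
  rw [Nnorm_eq_Nnorm4_rpow, one_div, ← Real.rpow_natCast, ← Real.rpow_mul h]
  norm_num

theorem XD_sum_sq_fst : XD Λ (fun q => ∑ j, q.1 j ^ 2) i p = 2 * p.1 i := by
  rw [XD_sum _ _ _ fun j _ => by fun_prop]
  calc ∑ j, XD Λ (fun q => q.1 j ^ 2) i p = ∑ j, 2 * p.1 j * (if j = i then 1 else 0) :=
        Finset.sum_congr rfl fun j _ => by rw [XD_pow Λ i 2 (by fun_prop), XD_fst]; norm_num
    _ = 2 * p.1 i := by simp

theorem XD_sum_sq_snd :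
    XD Λ (fun q => ∑ k, q.2 k ^ 2) i p = ∑ k, p.2 k * (Λ k *ᵥ p.1) i := by
  rw [XD_sum _ _ _ fun k _ => by fun_prop]
  refine Finset.sum_congr rfl fun k _ => ?_
  rw [XD_pow Λ i 2 (by fun_prop), XD_snd]
  norm_num
  ring

theorem XD_mulVec_fst {κ : Type*} [Fintype κ] (M : Matrix κ (Fin n) ℝ) (j : κ) :
    XD Λ (fun q => (M *ᵥ q.1) j) i p = M j i := by
  simp only [Matrix.mulVec, dotProduct]
  rw [XD_sum _ _ _ fun l _ => by fun_prop]
  calc ∑ l, XD Λ (fun q => M j l * q.1 l) i p = ∑ l, M j l * if l = i then 1 else 0 :=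
        Finset.sum_congr rfl fun l _ => by rw [XD_const_mul _ _ _ (by fun_prop), XD_fst]
    _ = M j i := by simp

theorem XD_Nnorm4 : XD Λ (Nnorm4 a) i p = Nnorm4Deriv Λ a i p := by
  unfold Nnorm4
  rw [XD_add _ _ (by fun_prop) (by fun_prop), XD_pow _ _ _ (by fun_prop),
    XD_const_mul _ _ _ (by fun_prop), XD_sum_sq_fst, XD_sum_sq_snd, Nnorm4Deriv]
  norm_num
  ring

theorem XD_Nnorm4Deriv (hskew : ∀ k, (Λ k)ᵀ = -Λ k) :
    XD Λ (Nnorm4Deriv Λ a i) i p =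
      4 * (∑ j, p.1 j ^ 2) + 8 * p.1 i ^ 2 + a / 2 * ∑ k, (Λ k *ᵥ p.1) i ^ 2 := by
  have hz : ∀ k, DifferentiableAt ℝ (fun q : Pt n m => q.2 k) p := fun k => by fun_prop
  have hL : ∀ k, DifferentiableAt ℝ (fun q : Pt n m => (Λ k *ᵥ q.1) i) p := fun k => by
    simp only [Matrix.mulVec, dotProduct]; fun_prop
  have hterm : ∀ k, XD Λ (fun q => q.2 k * (Λ k *ᵥ q.1) i) i p = (Λ k *ᵥ p.1) i ^ 2 / 2 :=
    fun k => by
      rw [XD_mul _ _ (hz k) (hL k), XD_snd, XD_mulVec_fst,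
        Matrix.diag_eq_zero_of_transpose_eq_neg (hskew k)]
      ring
  unfold Nnorm4Deriv
  rw [XD_add _ _ (by fun_prop) (by fun_prop), XD_mul _ _ (by fun_prop) (by fun_prop),
    XD_const_mul _ _ _ (by fun_prop), XD_const_mul _ _ _ (by fun_prop), XD_sum_sq_fst, XD_fst,
    XD_sum _ _ _ (F := fun k q => q.2 k * (Λ k *ᵥ q.1) i) fun k _ => (hz k).mul (hL k),
    Finset.sum_congr rfl fun k _ => hterm k, if_pos rfl, ← Finset.sum_div]
  ring

theorem XD_Nnorm (h : Nnorm4 a p ≠ 0) :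
    XD Λ (Nnorm a) i p = 1 / 4 * Nnorm4 a p ^ (-(3 : ℝ) / 4) * Nnorm4Deriv Λ a i p := by
  rw [show Nnorm a = fun q : Pt n m => Nnorm4 a q ^ ((1 : ℝ) / 4) from rfl,
    XD_rpow_const _ _ _ (differentiable_Nnorm4 a p) h, XD_Nnorm4]
  norm_num

theorem XD_XD_Nnorm (hskew : ∀ k, (Λ k)ᵀ = -Λ k) (h : 0 < Nnorm4 a p) :
    XD Λ (fun q => XD Λ (Nnorm a) i q) i p =
      (4 * (∑ j, p.1 j ^ 2) + 8 * p.1 i ^ 2 + a / 2 * ∑ k, (Λ k *ᵥ p.1) i ^ 2) /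
          (4 * Nnorm a p ^ 3) -
        3 * Nnorm4Deriv Λ a i p ^ 2 / (16 * Nnorm a p ^ 7) := by
  have hXN : (fun q => XD Λ (Nnorm a) i q) =ᶠ[nhds p]
      fun q => 1 / 4 * Nnorm4 a q ^ (-(3 : ℝ) / 4) * Nnorm4Deriv Λ a i q :=
    ((differentiable_Nnorm4 a).continuous.continuousAt.eventually_ne h.ne').mono
      fun q hq => XD_Nnorm Λ a i hq
  have hrpow := (differentiable_Nnorm4 a p).rpow_const (p := -(3 : ℝ) / 4) (Or.inl h.ne')
  rw [XD_congr Λ i hXN, XD_mul _ _ (hrpow.const_mul _) (differentiable_Nnorm4Deriv Λ a i p),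
    XD_const_mul _ _ _ hrpow, XD_rpow_const _ _ _ (differentiable_Nnorm4 a p) h.ne',
    XD_Nnorm4, XD_Nnorm4Deriv Λ a i hskew,
    show -(3 : ℝ) / 4 - 1 = -((7 : ℕ) : ℝ) / 4 by norm_num,
    show -(3 : ℝ) / 4 = -((3 : ℕ) : ℝ) / 4 by norm_num,
    Nnorm4_rpow_neg_div_four h.le, Nnorm4_rpow_neg_div_four h.le]
  field_simp
  ring

theorem sum_Nnorm4Deriv_sq (hskew : ∀ k, (Λ k)ᵀ = -Λ k) :
    ∑ i, Nnorm4Deriv Λ a i p ^ 2 =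
      16 * (∑ j, p.1 j ^ 2) ^ 3 + a ^ 2 * ∑ i, (∑ k, p.2 k * (Λ k *ᵥ p.1) i) ^ 2 := by
  have hcross : ∑ i, p.1 i * ∑ k, p.2 k * (Λ k *ᵥ p.1) i = 0 := by
    simp only [Finset.mul_sum]
    rw [Finset.sum_comm]
    refine Finset.sum_eq_zero fun k _ => ?_
    simp only [mul_left_comm (p.1 _), ← Finset.mul_sum]
    rw [← dotProduct, Matrix.dotProduct_mulVec_self_eq_zero_of_transpose_eq_neg (hskew k),
      mul_zero]
  have hsq : ∀ i, Nnorm4Deriv Λ a i p ^ 2 =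
      16 * (∑ j, p.1 j ^ 2) ^ 2 * p.1 i ^ 2 +
        8 * a * (∑ j, p.1 j ^ 2) * (p.1 i * ∑ k, p.2 k * (Λ k *ᵥ p.1) i) +
        a ^ 2 * (∑ k, p.2 k * (Λ k *ᵥ p.1) i) ^ 2 := fun i => by
    rw [Nnorm4Deriv]; ring
  simp only [hsq, Finset.sum_add_distrib, ← Finset.mul_sum, hcross]
  ring

theorem subLap_Nnorm (hskew : ∀ k, (Λ k)ᵀ = -Λ k) (h : 0 < Nnorm4 a p) :
    subLap Λ (Nnorm a) p =
      ((n + 2) * ∑ j, p.1 j ^ 2 + a / 8 * ∑ i, ∑ k, (Λ k *ᵥ p.1) i ^ 2) / Nnorm a p ^ 3 -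
        3 * (16 * (∑ j, p.1 j ^ 2) ^ 3 +
          a ^ 2 * ∑ i, (∑ k, p.2 k * (Λ k *ᵥ p.1) i) ^ 2) / (16 * Nnorm a p ^ 7) := by
  rw [subLap, Finset.sum_congr rfl fun i _ => XD_XD_Nnorm Λ a i hskew h,
    ← sum_Nnorm4Deriv_sq Λ a hskew]
  simp only [Finset.sum_sub_distrib, ← Finset.sum_div, Finset.sum_add_distrib, ← Finset.mul_sum,
    Finset.sum_const, Finset.card_univ, Fintype.card_fin, nsmul_eq_mul]
  ring

end HomogeneousNorm

theorem statement_19_general (n m : ℕ)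
    (Λ : Fin m → Matrix (Fin n) (Fin n) ℝ)
    (hskew : ∀ k, (Λ k).transpose = -(Λ k))
    (a : ℝ) (ha : 0 < a) :
    ∀ p : Pt n m, p.1 ≠ 0 →
      subLap Λ (Nnorm a) p =
        ((n : ℝ) - 1) * (∑ i, (p.1 i) ^ 2) / (Nnorm a p) ^ 3 +
        ((∑ i, (p.1 i) ^ 2) / (Nnorm a p) ^ 3) *
          (-3 * ((-(a * ∑ k, (p.2 k) ^ 2) +
            a ^ 2 / 16 * ∑ k : Fin m, ∑ k' : Fin m, ∑ l : Fin n, ∑ l' : Fin n, ∑ i : Fin n,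
              Λ k i l * Λ k' i l' * (p.1 l / Real.sqrt (∑ j, (p.1 j) ^ 2)) *
                (p.1 l' / Real.sqrt (∑ j, (p.1 j) ^ 2)) * p.2 k * p.2 k') / (Nnorm a p) ^ 4) +
          a / 8 * ∑ k : Fin m, ∑ l : Fin n, ∑ l' : Fin n, ∑ i : Fin n,
            Λ k i l * Λ k i l' * (p.1 l / Real.sqrt (∑ j, (p.1 j) ^ 2)) *
              (p.1 l' / Real.sqrt (∑ j, (p.1 j) ^ 2))) := by
  intro p hx
  have hpos : 0 < Nnorm4 a p := Nnorm4_pos ha.le hx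
  have hN4 : Nnorm a p ^ 4 = (∑ j, p.1 j ^ 2) ^ 2 + a * ∑ k, p.2 k ^ 2 := Nnorm_pow_four hpos.le
  have hN : 0 < Nnorm a p := Real.rpow_pos_of_pos hpos _
  have hA : 0 < ∑ j, p.1 j ^ 2 := sum_sq_pos_of_ne_zero hx
  rw [subLap_Nnorm Λ a hskew hpos, ← Matrix.sum_sum_mulVec_sq, ← Matrix.sum_sq_sum_mul_mulVec]
  simp only [Matrix.mulVec_div_const, div_pow, ← Finset.sum_div, mul_div_assoc']
  rw [Real.sq_sqrt hA.le]
  field_simp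
  linear_combination 384 * (∑ j, p.1 j ^ 2) * hN4

theorem statement_19 (n m : ℕ) (hn : 1 ≤ n) (hm : 1 ≤ m)
    (Λ : Fin m → Matrix (Fin n) (Fin n) ℝ)
    (hskew : ∀ k, (Λ k).transpose = -(Λ k))
    (hli : LinearIndependent ℝ Λ)
    (a : ℝ) (ha : 0 < a) :
    ∀ p : Pt n m, p.1 ≠ 0 →
      subLap Λ (Nnorm a) p =
        ((n : ℝ) - 1) * (∑ i, (p.1 i) ^ 2) / (Nnorm a p) ^ 3 +
        ((∑ i, (p.1 i) ^ 2) / (Nnorm a p) ^ 3) *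
          (-3 * ((-(a * ∑ k, (p.2 k) ^ 2) +
            a ^ 2 / 16 * ∑ k : Fin m, ∑ k' : Fin m, ∑ l : Fin n, ∑ l' : Fin n, ∑ i : Fin n,
              Λ k i l * Λ k' i l' * (p.1 l / Real.sqrt (∑ j, (p.1 j) ^ 2)) *
                (p.1 l' / Real.sqrt (∑ j, (p.1 j) ^ 2)) * p.2 k * p.2 k') / (Nnorm a p) ^ 4) +
          a / 8 * ∑ k : Fin m, ∑ l : Fin n, ∑ l' : Fin n, ∑ i : Fin n,
            Λ k i l * Λ k i l' * (p.1 l / Real.sqrt (∑ j, (p.1 j) ^ 2)) *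
              (p.1 l' / Real.sqrt (∑ j, (p.1 j) ^ 2))) :=
  statement_19_general n m Λ hskew a ha
end
end
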